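/- (Descending Landen transformation of the elliptic modulus.) For 0 < q < 1 define θ₂(q) = Σ_{n∈ℤ} q^{(n+1/2)²}, θ₃(q) = Σ_{n∈ℤ} q^{n²}, and the elliptic modulus k(q) = θ₂(q)²/θ₃(q)². Then 0 ≤ k(q) ≤ 1 and k(q²) · ( 1 + √(1 − k(q)²) ) = 1 − √(1 − k(q)²). -/

import Mathlib

/-- The theta constant `θ₂(q) = Σ_{n∈ℤ} q^{(n+1/2)²}`. -/
noncomputable def theta2 (q : ℝ) : ℝ := ∑' n : ℤ, q ^ (((n : ℝ) + 1 / 2) ^ 2)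

/-- The theta constant `θ₃(q) = Σ_{n∈ℤ} q^{n²}`. -/
noncomputable def theta3 (q : ℝ) : ℝ := ∑' n : ℤ, q ^ ((n : ℝ) ^ 2)

/-- The elliptic modulus `k(q) = θ₂(q)²/θ₃(q)²`. -/
noncomputable def ellipticModulus (q : ℝ) : ℝ := theta2 q ^ 2 / theta3 q ^ 2

/-!
Split the double series `θ(a, q) θ(b, q) = Σ_{m,n} q^{(m+a)² + (n+b)²}` according to the parity
of `m + n` and write `m = s + t` (resp. `s + t + 1`), `n = s - t`: since
`(s + t + a)² + (s - t + b)² = 2 (s + (a+b)/2)² + 2 (t + (a-b)/2)²`, each half is again a product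
of theta series, now in `q²`. This gives the duplication formulas
`θ₃(q)² = θ₃(q²)² + θ₂(q²)²` and `θ₂(q)² = 2 θ₂(q²) θ₃(q²)`. Hence with `a = θ₂(q²) ≤ b = θ₃(q²)`
we get `k(q) = 2ab / (a² + b²)`, `√(1 - k(q)²) = (b² - a²) / (a² + b²)` and `k(q²) = a² / b²`,
and the Landen relation is an identity between rational functions of `a` and `b`.
-/

open Function

lemma hasSum_of_parity_split {α : Type*} [AddCommMonoid α] [TopologicalSpace α] [ContinuousAdd α]
    {f : ℤ × ℤ → α} {a b : α}
    (h₀ : HasSum (fun st : ℤ × ℤ => f (st.1 + st.2, st.1 - st.2)) a)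
    (h₁ : HasSum (fun st : ℤ × ℤ => f (st.1 + st.2 + 1, st.1 - st.2)) b) :
    HasSum f (a + b) := by
  set g₀ : ℤ × ℤ → ℤ × ℤ := fun st => (st.1 + st.2, st.1 - st.2)
  set g₁ : ℤ × ℤ → ℤ × ℤ := fun st => (st.1 + st.2 + 1, st.1 - st.2)
  have hg₀ : Injective g₀ := by
    rintro ⟨s, t⟩ ⟨s', t'⟩ h
    simp only [g₀, Prod.mk.injEq] at h ⊢
    omega
  have hg₁ : Injective g₁ := by
    rintro ⟨s, t⟩ ⟨s', t'⟩ h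
    simp only [g₁, Prod.mk.injEq] at h ⊢
    omega
  have hcompl : IsCompl (Set.range g₀) (Set.range g₁) := by
    constructor
    · rw [Set.disjoint_left]
      rintro _ ⟨⟨s, t⟩, rfl⟩ ⟨⟨s', t'⟩, h⟩
      simp only [g₀, g₁, Prod.mk.injEq] at h
      omega
    · rw [codisjoint_iff_le_sup]
      rintro ⟨m, n⟩ -
      rcases Int.emod_two_eq_zero_or_one (m + n) with h | h
      · exact Or.inl ⟨((m + n) / 2, (m - n) / 2), by simp only [g₀, Prod.mk.injEq]; omega⟩
      · exact Or.inr ⟨((m + n - 1) / 2, (m - n - 1) / 2), by simp only [g₁, Prod.mk.injEq]; omega⟩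
  exact (hg₀.hasSum_range_iff.2 h₀).add_isCompl hcompl (hg₁.hasSum_range_iff.2 h₁)

lemma Real.rpow_mul_rpow_eq_sq_rpow_mul_sq_rpow {q x y u v : ℝ} (hq : 0 < q)
    (h : x + y = 2 * (u + v)) : q ^ x * q ^ y = (q ^ 2) ^ u * (q ^ 2) ^ v := by
  rw [← Real.rpow_add hq, ← Real.rpow_add (by positivity), h, Real.rpow_mul hq.le,
    Real.rpow_two]

noncomputable def shiftedTheta (c q : ℝ) : ℝ := ∑' n : ℤ, q ^ (((n : ℝ) + c) ^ 2)

section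

variable {q : ℝ}

lemma summable_rpow_sq_add (hq0 : 0 < q) (hq1 : q < 1) (c : ℝ) :
    Summable fun n : ℤ => q ^ (((n : ℝ) + c) ^ 2) := by
  have hgeom : Summable fun n : ℤ => q ^ (-(c ^ 2 + 1 / 2)) * q ^ n.natAbs := by
    refine Summable.mul_left _ (Summable.of_nat_of_neg ?_ ?_) <;>
      simpa using summable_geometric_of_lt_one hq0.le hq1
  refine hgeom.of_nonneg_of_le (fun n => (Real.rpow_pos_of_pos hq0 _).le) fun n => ?_
  have hexp : (n.natAbs : ℝ) - (c ^ 2 + 1 / 2) ≤ ((n : ℝ) + c) ^ 2 := by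
    rw [Nat.cast_natAbs, Int.cast_abs]
    nlinarith [sq_nonneg ((n : ℝ) + 2 * c), sq_nonneg (|(n : ℝ)| - 1), sq_abs (n : ℝ)]
  calc q ^ (((n : ℝ) + c) ^ 2) ≤ q ^ ((n.natAbs : ℝ) - (c ^ 2 + 1 / 2)) :=
        Real.rpow_le_rpow_of_exponent_ge hq0 hq1.le hexp
    _ = q ^ (-(c ^ 2 + 1 / 2)) * q ^ n.natAbs := by
        rw [sub_eq_add_neg, Real.rpow_add hq0, Real.rpow_natCast, mul_comm]

lemma shiftedTheta_pos (hq0 : 0 < q) (hq1 : q < 1) (c : ℝ) : 0 < shiftedTheta c q :=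
  (summable_rpow_sq_add hq0 hq1 c).tsum_pos (fun _ => (Real.rpow_pos_of_pos hq0 _).le) 0
    (Real.rpow_pos_of_pos hq0 _)

lemma shiftedTheta_add_one (c q : ℝ) : shiftedTheta (c + 1) q = shiftedTheta c q := by
  rw [shiftedTheta, shiftedTheta,
    ← (Equiv.addRight (1 : ℤ)).tsum_eq fun n : ℤ => q ^ (((n : ℝ) + c) ^ 2)]
  congr 1
  funext n
  simp only [Equiv.coe_addRight]
  push_cast
  ring_nf

lemma hasSum_shiftedTheta_mul_shiftedTheta (hq0 : 0 < q) (hq1 : q < 1) (c d : ℝ) :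
    HasSum (fun st : ℤ × ℤ => q ^ (((st.1 : ℝ) + c) ^ 2) * q ^ (((st.2 : ℝ) + d) ^ 2))
      (shiftedTheta c q * shiftedTheta d q) := by
  have hc := summable_rpow_sq_add hq0 hq1 c
  have hd := summable_rpow_sq_add hq0 hq1 d
  have hcd := hc.mul_of_nonneg hd (fun _ => (Real.rpow_pos_of_pos hq0 _).le)
    fun _ => (Real.rpow_pos_of_pos hq0 _).le
  exact hc.hasSum.mul hd.hasSum hcd

lemma shiftedTheta_mul_shiftedTheta (hq0 : 0 < q) (hq1 : q < 1) (a b : ℝ) :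
    shiftedTheta a q * shiftedTheta b q =
      shiftedTheta ((a + b) / 2) (q ^ 2) * shiftedTheta ((a - b) / 2) (q ^ 2) +
        shiftedTheta ((a + b + 1) / 2) (q ^ 2) * shiftedTheta ((a - b + 1) / 2) (q ^ 2) := by
  have hq20 : 0 < q ^ 2 := by positivity
  have hq21 : q ^ 2 < 1 := pow_lt_one₀ hq0.le hq1 two_ne_zero
  refine (hasSum_shiftedTheta_mul_shiftedTheta hq0 hq1 a b).unique
    (hasSum_of_parity_split ?_ ?_)
  · convert hasSum_shiftedTheta_mul_shiftedTheta hq20 hq21 ((a + b) / 2) ((a - b) / 2) using 2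
    push_cast
    exact Real.rpow_mul_rpow_eq_sq_rpow_mul_sq_rpow hq0 (by ring)
  · convert hasSum_shiftedTheta_mul_shiftedTheta hq20 hq21 ((a + b + 1) / 2) ((a - b + 1) / 2)
      using 2
    push_cast
    exact Real.rpow_mul_rpow_eq_sq_rpow_mul_sq_rpow hq0 (by ring)

lemma theta2_eq_shiftedTheta (q : ℝ) : theta2 q = shiftedTheta (1 / 2) q := rfl

lemma theta3_eq_shiftedTheta (q : ℝ) : theta3 q = shiftedTheta 0 q := by
  simp only [theta3, shiftedTheta, add_zero]

lemma theta3_sq (hq0 : 0 < q) (hq1 : q < 1) :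
    theta3 q ^ 2 = theta3 (q ^ 2) ^ 2 + theta2 (q ^ 2) ^ 2 := by
  have h := shiftedTheta_mul_shiftedTheta hq0 hq1 0 0
  norm_num at h
  rw [theta3_eq_shiftedTheta, theta3_eq_shiftedTheta, theta2_eq_shiftedTheta]
  linear_combination h

lemma theta2_sq (hq0 : 0 < q) (hq1 : q < 1) :
    theta2 q ^ 2 = 2 * theta2 (q ^ 2) * theta3 (q ^ 2) := by
  have h := shiftedTheta_mul_shiftedTheta hq0 hq1 (1 / 2) (1 / 2)
  norm_num at h
  have h1 : shiftedTheta 1 (q ^ 2) = shiftedTheta 0 (q ^ 2) := by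
    rw [← shiftedTheta_add_one 0, zero_add]
  rw [h1] at h
  rw [theta3_eq_shiftedTheta, theta2_eq_shiftedTheta, theta2_eq_shiftedTheta]
  linear_combination h

lemma theta2_le_theta3 (hq0 : 0 < q) (hq1 : q < 1) : theta2 q ≤ theta3 q := by
  have hdiff : theta3 q ^ 2 - theta2 q ^ 2 = (theta3 (q ^ 2) - theta2 (q ^ 2)) ^ 2 := by
    rw [theta3_sq hq0 hq1, theta2_sq hq0 hq1]
    ring
  have h2 : 0 < theta2 q := shiftedTheta_pos hq0 hq1 _
  have h3 : 0 < theta3 q := (theta3_eq_shiftedTheta q).symm ▸ shiftedTheta_pos hq0 hq1 _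
  nlinarith [sq_nonneg (theta3 (q ^ 2) - theta2 (q ^ 2))]

end

lemma sq_div_sq_mul_one_add_sqrt_eq_one_sub_sqrt {a b : ℝ} (ha : 0 ≤ a) (hab : a ≤ b) :
    a ^ 2 / b ^ 2 * (1 + √(1 - (2 * a * b / (b ^ 2 + a ^ 2)) ^ 2)) =
      1 - √(1 - (2 * a * b / (b ^ 2 + a ^ 2)) ^ 2) := by
  obtain rfl | hb := (ha.trans hab).eq_or_lt
  · obtain rfl : a = 0 := le_antisymm hab ha
    norm_num
  have hden : 0 < b ^ 2 + a ^ 2 := by positivity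
  have hsqrt : √(1 - (2 * a * b / (b ^ 2 + a ^ 2)) ^ 2) = (b ^ 2 - a ^ 2) / (b ^ 2 + a ^ 2) := by
    have hsq : 1 - (2 * a * b / (b ^ 2 + a ^ 2)) ^ 2 = ((b ^ 2 - a ^ 2) / (b ^ 2 + a ^ 2)) ^ 2 := by
      field_simp
      ring
    rw [hsq, Real.sqrt_sq (div_nonneg (by nlinarith) hden.le)]
  rw [hsqrt]
  field_simp
  ring

/-- Descending Landen transformation: for `0 < q < 1`, `0 ≤ k(q) ≤ 1` and
`k(q²)(1 + √(1 − k(q)²)) = 1 − √(1 − k(q)²)`. -/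
theorem landen_transformation (q : ℝ) (hq0 : 0 < q) (hq1 : q < 1) :
    0 ≤ ellipticModulus q ∧ ellipticModulus q ≤ 1 ∧
    ellipticModulus (q ^ 2) * (1 + Real.sqrt (1 - ellipticModulus q ^ 2)) =
      1 - Real.sqrt (1 - ellipticModulus q ^ 2) := by
  have hq20 : 0 < q ^ 2 := by positivity
  have hq21 : q ^ 2 < 1 := pow_lt_one₀ hq0.le hq1 two_ne_zero
  have ha : 0 < theta2 (q ^ 2) := shiftedTheta_pos hq20 hq21 _
  have hk : ellipticModulus q =
      2 * theta2 (q ^ 2) * theta3 (q ^ 2) / (theta3 (q ^ 2) ^ 2 + theta2 (q ^ 2) ^ 2) := by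
    rw [ellipticModulus, theta2_sq hq0 hq1, theta3_sq hq0 hq1]
  refine ⟨div_nonneg (sq_nonneg _) (sq_nonneg _), ?_, ?_⟩
  · rw [hk]
    exact div_le_one_of_le₀ (by nlinarith [two_mul_le_add_sq (theta2 (q ^ 2)) (theta3 (q ^ 2))])
      (by positivity)
  · rw [hk]
    exact sq_div_sq_mul_one_add_sqrt_eq_one_sub_sqrt ha.le (theta2_le_theta3 hq20 hq21)
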